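/- Let X be a real random variable with E[X] = 0 and E[X²] = σ² < ∞, let α_n → ∞ be a sequence of positive reals, and let u_n → 0 be a real sequence. Then E[ψ_{α_n}(X − u_n)²] − (E[ψ_{α_n}(X − u_n)])² → σ² as n → ∞. -/
import Mathlib


open MeasureTheory Filter

/-- The Huber score function: `ψ_α(x) = x` if `|x| ≤ α`, and `α · sign(x)` otherwise. -/
noncomputable def huberScore (α x : ℝ) : ℝ := if |x| ≤ α then x else α * Real.sign x

lemma measurable_realSign : Measurable Real.sign := by
  unfold Real.sign
  exact (measurable_const.ite (measurableSet_lt measurable_id measurable_const)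
    (measurable_const.ite (measurableSet_lt measurable_const measurable_id) measurable_const))

lemma measurable_huberScore (α : ℝ) : Measurable (huberScore α) := by
  unfold huberScore
  exact Measurable.ite (measurableSet_le measurable_id.abs measurable_const)
    measurable_id ((measurable_realSign).const_mul α)

lemma abs_huberScore_le (α x : ℝ) (hα : 0 ≤ α) : |huberScore α x| ≤ |x| := by
  unfold huberScore
  split_ifs with h
  · exact le_rfl
  · push_neg at h
    rcases lt_trichotomy x 0 with hx | hx | hx
    · rw [Real.sign_of_neg hx]
      rw [abs_of_nonpos (by nlinarith)]
      nlinarith [h.le]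
    · simp [hx] at h; nlinarith
    · rw [Real.sign_of_pos hx]
      rw [abs_of_nonneg (by nlinarith)]
      nlinarith [h.le]

lemma huberScore_tendsto {α : ℕ → ℝ} (hα : Tendsto α atTop atTop)
    {u : ℕ → ℝ} (hu : Tendsto u atTop (nhds 0)) (x : ℝ) :
    Tendsto (fun n => huberScore (α n) (x - u n)) atTop (nhds x) := by
  have hsub : Tendsto (fun n => x - u n) atTop (nhds x) := by
    simpa using tendsto_const_nhds.sub hu
  have h1 : ∀ᶠ n in atTop, |x - u n| ≤ α n := by
    have hA : ∀ᶠ n in atTop, |x| + 1 ≤ α n := hα.eventually_ge_atTop _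
    have hB : ∀ᶠ n in atTop, |x - u n| < |x| + 1 := by
      have : Tendsto (fun n => |x - u n|) atTop (nhds |x|) := hsub.abs
      exact this.eventually_lt_const (by linarith [abs_nonneg x])
    filter_upwards [hA, hB] with n hA hB
    linarith
  have heq : (fun n => huberScore (α n) (x - u n)) =ᶠ[atTop] fun n => x - u n := by
    filter_upwards [h1] with n hn
    simp [huberScore, hn]
  exact Tendsto.congr' heq.symm hsub

/-- If `E X = 0`, `E X² = σ² < ∞`, `α_n → ∞` and `u_n → 0`, then
`Var ψ_{α_n}(X − u_n) = E[ψ_{α_n}(X − u_n)²] − (E ψ_{α_n}(X − u_n))² → σ²`. -/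
theorem huber_variance_tendsto {Ω : Type*} [MeasureSpace Ω]
    [IsProbabilityMeasure (volume : Measure Ω)]
    (X : Ω → ℝ) (hXmeas : Measurable X)
    (hXsq : Integrable (fun ω => (X ω) ^ 2))
    (hmean : ∫ ω, X ω = 0)
    (σ2 : ℝ) (hσ2 : ∫ ω, (X ω) ^ 2 = σ2)
    (α : ℕ → ℝ) (hαpos : ∀ n, 0 < α n) (hα : Tendsto α atTop atTop)
    (u : ℕ → ℝ) (hu : Tendsto u atTop (nhds 0)) :
    Tendsto
      (fun n => (∫ ω, (huberScore (α n) (X ω - u n)) ^ 2)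
        - (∫ ω, huberScore (α n) (X ω - u n)) ^ 2)
      atTop (nhds σ2) := by
  -- bound on u
  obtain ⟨C, hC⟩ : ∃ C, ∀ n, |u n| ≤ C := by
    have : BddAbove (Set.range fun n => |u n|) := (hu.abs).bddAbove_range
    obtain ⟨C, hC⟩ := this
    exact ⟨C, fun n => hC ⟨n, rfl⟩⟩
  -- X is integrable
  have hXint : Integrable X := by
    refine (hXsq.add (integrable_const 1)).mono' hXmeas.aestronglyMeasurable ?_
    filter_upwards with ω
    rw [Real.norm_eq_abs]
    simp only [Pi.add_apply]
    nlinarith [abs_nonneg (X ω), sq_abs (X ω), sq_nonneg (|X ω| - 1)]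
  -- measurability
  have hmeasn : ∀ n, AEStronglyMeasurable (fun ω => huberScore (α n) (X ω - u n)) volume :=
    fun n => ((measurable_huberScore (α n)).comp (hXmeas.sub measurable_const)).aestronglyMeasurable
  -- pointwise convergence
  have hpt : ∀ ω, Tendsto (fun n => huberScore (α n) (X ω - u n)) atTop (nhds (X ω)) :=
    fun ω => huberScore_tendsto hα hu (X ω)
  -- pointwise bound
  have hbd : ∀ n ω, |huberScore (α n) (X ω - u n)| ≤ |X ω| + C := by
    intro n ω
    calc |huberScore (α n) (X ω - u n)| ≤ |X ω - u n| :=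
          abs_huberScore_le _ _ (hαpos n).le
      _ ≤ |X ω| + |u n| := abs_sub _ _
      _ ≤ |X ω| + C := by linarith [hC n]
  have hC0 : 0 ≤ C := le_trans (abs_nonneg _) (hC 0)
  -- first limit: means
  have h1 : Tendsto (fun n => ∫ ω, huberScore (α n) (X ω - u n)) atTop (nhds 0) := by
    rw [← hmean]
    refine tendsto_integral_of_dominated_convergence (fun ω => |X ω| + C)
      hmeasn (hXint.abs.add (integrable_const C)) ?_ ?_
    · intro n; filter_upwards with ω; exact hbd n ω
    · filter_upwards with ω; exact hpt ω
  -- second limit: second moments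
  have h2 : Tendsto (fun n => ∫ ω, (huberScore (α n) (X ω - u n)) ^ 2) atTop (nhds σ2) := by
    rw [← hσ2]
    refine tendsto_integral_of_dominated_convergence (fun ω => 2 * (X ω) ^ 2 + 2 * C ^ 2)
      (fun n => (hmeasn n).pow 2) (((hXsq.const_mul 2)).add (integrable_const (2 * C ^ 2))) ?_ ?_
    · intro n; filter_upwards with ω
      have h := hbd n ω
      have h0 := abs_nonneg (huberScore (α n) (X ω - u n))
      rw [Real.norm_eq_abs, abs_pow]
      have hmul : |huberScore (α n) (X ω - u n)| * |huberScore (α n) (X ω - u n)|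
          ≤ (|X ω| + C) * (|X ω| + C) :=
        mul_le_mul h h h0 (by positivity)
      nlinarith [sq_abs (X ω), abs_nonneg (X ω), sq_nonneg (|X ω| - C)]
    · filter_upwards with ω
      exact (hpt ω).pow 2
  have := h2.sub ((h1.pow 2))
  simpa using this
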